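/- arXiv:1510.03844 — 2 statements merged into one kernel-verified Lean document; each statement's English description precedes it below -/
import Mathlib

section
/- Let n ≥ 2 and let A, B be centrally symmetric convex bodies in ℝⁿ. If for every convex body K in ℝⁿ and every (n−1)-dimensional linear subspace E of ℝⁿ one has vol_{n-1}(E ∩ (A + K)) ≤ vol_{n-1}(E ∩ (B + K)), then A ⊆ B. -/
/-!
Let `a ∈ A \ B`. Since `B` is symmetric, a hyperplane separates `a` from `B` in the form
`|⟪w, y⟫| ≤ β < ⟪w, a⟫` for `y ∈ B`, with `w` a unit vector. Choose a hyperplane `E ∋ w` and let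
`K` be a box with half-width `1` along `w`, `ρ + 1` normal to `E` (`ρ` bounds the norms in `A` and
`B`) and a huge `R` along the remaining `n - 2` directions of `E`. Then `E ∩ (B + K)` lies in the
box of half-widths `β + 1` and `R + ρ` in `E`, while `E ∩ (A + K)` contains the box of half-widths
`⟪w, a⟫ + 1` and `R - ρ`: shift a point of it by a multiple of `a`, using `[-a, a] ⊆ A`. For large
`R` the second box has the larger volume.
-/

open MeasureTheory Pointwise Module RealInnerProductSpace Filter Set Topology

theorem exists_abs_le_one_abs_sub_mul_le {u α r : ℝ} (hr : 0 ≤ r) (hu : |u| ≤ α + r) :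
    ∃ t : ℝ, |t| ≤ 1 ∧ |u - t * α| ≤ r := by
  obtain ⟨hu₁, hu₂⟩ := abs_le.1 hu
  by_cases hα : α ≤ u
  · exact ⟨1, by simp, abs_le.2 ⟨by linarith, by linarith⟩⟩
  by_cases hα' : u ≤ -α
  · exact ⟨-1, by simp, abs_le.2 ⟨by linarith, by linarith⟩⟩
  have hαpos : 0 < α := by linarith
  refine ⟨u / α, ?_, by rwa [div_mul_cancel₀ _ hαpos.ne', sub_self, abs_zero]⟩
  rw [abs_div, abs_of_pos hαpos, div_le_one hαpos]
  exact abs_le.2 ⟨by linarith, by linarith⟩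

theorem eventually_mul_add_pow_lt_mul_sub_pow {p q : ℝ} (hpq : p < q) (ρ : ℝ) (m : ℕ) :
    ∀ᶠ R in atTop, p * (R + ρ) ^ m < q * (R - ρ) ^ m := by
  have hlim : Tendsto (fun R : ℝ => q * (1 - ρ / R) ^ m - p * (1 + ρ / R) ^ m) atTop
      (𝓝 (q - p)) := by
    have h0 : Tendsto (fun R : ℝ => ρ / R) atTop (𝓝 0) := tendsto_const_nhds.div_atTop tendsto_id
    simpa using (((tendsto_const_nhds (x := (1 : ℝ))).sub h0).pow m).const_mul q |>.sub
      ((((tendsto_const_nhds (x := (1 : ℝ))).add h0).pow m).const_mul p)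
  filter_upwards [hlim.eventually (eventually_gt_nhds (sub_pos.2 hpq)), eventually_gt_atTop 0]
    with R hR hRpos
  have key : q * (R - ρ) ^ m - p * (R + ρ) ^ m
      = R ^ m * (q * (1 - ρ / R) ^ m - p * (1 + ρ / R) ^ m) := by
    rw [one_sub_div hRpos.ne', one_add_div hRpos.ne', div_pow, div_pow]
    field_simp
  nlinarith [pow_pos hRpos m, mul_pos (pow_pos hRpos m) hR]

theorem exists_unit_abs_inner_le_lt_inner {V : Type*} [NormedAddCommGroup V]
    [InnerProductSpace ℝ V] [CompleteSpace V] {B : Set V} {a : V} (hconv : Convex ℝ B)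
    (hclosed : IsClosed B) (hbal : Balanced ℝ B) (hne : B.Nonempty) (ha : a ∉ B) :
    ∃ w : V, ∃ β : ℝ, ‖w‖ = 1 ∧ 0 ≤ β ∧ (∀ y ∈ B, |⟪w, y⟫| ≤ β) ∧ β < ⟪w, a⟫ := by
  obtain ⟨f, u, hfB, hfa⟩ := geometric_hahn_banach_closed_point hconv hclosed ha
  set w₀ := (InnerProductSpace.toDual ℝ V).symm f
  have hw₀ (x : V) : ⟪w₀, x⟫ = f x := InnerProductSpace.toDual_symm_apply
  have hB (y : V) (hy : y ∈ B) : |⟪w₀, y⟫| ≤ u := by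
    have := hfB (-y) (hbal.neg_mem_iff.2 hy)
    rw [map_neg] at this
    exact abs_le.2 ⟨by linarith [hw₀ y], by linarith [hw₀ y, hfB y hy]⟩
  have hw₀ne : w₀ ≠ 0 := by
    intro h
    obtain ⟨y, hy⟩ := hne
    have := (hB y hy).trans_lt (hfa.trans_eq (hw₀ a).symm)
    simp [h] at this
  have hn : 0 < ‖w₀‖⁻¹ := inv_pos.2 (norm_pos_iff.2 hw₀ne)
  refine ⟨‖w₀‖⁻¹ • w₀, ‖w₀‖⁻¹ * u, norm_smul_inv_norm hw₀ne, ?_, fun y hy => ?_, ?_⟩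
  · obtain ⟨y, hy⟩ := hne
    exact mul_nonneg hn.le ((abs_nonneg _).trans (hB y hy))
  · rw [real_inner_smul_left, abs_mul, abs_of_pos hn]
    exact mul_le_mul_of_nonneg_left (hB y hy) hn.le
  · rw [real_inner_smul_left, hw₀]
    exact mul_lt_mul_of_pos_left hfa hn

theorem exists_orthonormalBasis_apply_eq {ι V : Type*} [Fintype ι] [NormedAddCommGroup V]
    [InnerProductSpace ℝ V] [FiniteDimensional ℝ V] (hcard : finrank ℝ V = Fintype.card ι)
    (i₀ : ι) {w : V} (hw : ‖w‖ = 1) : ∃ b : OrthonormalBasis ι ℝ V, b i₀ = w := by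
  obtain ⟨b, hb⟩ := Orthonormal.exists_orthonormalBasis_extension_of_card_eq hcard
    (v := fun _ => w) (s := {i₀}) (orthonormal_subsingleton_iff.2 fun _ => hw)
  exact ⟨b, hb i₀ rfl⟩

namespace OrthonormalBasis

variable {ι V : Type*} [Fintype ι] [NormedAddCommGroup V] [InnerProductSpace ℝ V]

def box (b : OrthonormalBasis ι ℝ V) (r : ι → ℝ) : Set V := {x | ∀ i, |⟪b i, x⟫| ≤ r i}

variable (b : OrthonormalBasis ι ℝ V) (r : ι → ℝ)

theorem box_eq_iInter : b.box r = ⋂ i, (innerₛₗ ℝ (b i)) ⁻¹' Icc (-r i) (r i) := by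
  ext x
  simp [box, abs_le]

theorem convex_box : Convex ℝ (b.box r) := by
  rw [box_eq_iInter]
  exact convex_iInter fun i => (convex_Icc _ _).linear_preimage _

theorem isCompact_box [FiniteDimensional ℝ V] : IsCompact (b.box r) := by
  refine Metric.isCompact_of_isClosed_isBounded ?_ ?_
  · rw [box_eq_iInter]
    exact isClosed_iInter fun i => isClosed_Icc.preimage (innerSL ℝ (b i)).continuous
  · refine (Metric.isBounded_iff_subset_closedBall 0).2 ⟨∑ i, r i, fun x hx => ?_⟩
    rw [mem_closedBall_zero_iff, ← b.sum_repr' x]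
    calc ‖∑ i, ⟪b i, x⟫ • b i‖ ≤ ∑ i, ‖⟪b i, x⟫ • b i‖ := norm_sum_le _ _
      _ = ∑ i, |⟪b i, x⟫| := by simp [norm_smul, b.orthonormal.1]
      _ ≤ ∑ i, r i := Finset.sum_le_sum fun i _ => hx i

theorem interior_box_nonempty {r : ι → ℝ} (hr : ∀ i, 0 < r i) : (interior (b.box r)).Nonempty := by
  refine ⟨0, mem_interior.2 ⟨⋂ i, (fun x => ⟪b i, x⟫) ⁻¹' Ioo (-r i) (r i), ?_, ?_, ?_⟩⟩
  · exact fun x hx i => abs_le.2 (Ioo_subset_Icc_self (mem_iInter.1 hx i))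
  · exact isOpen_iInter_of_finite fun i => isOpen_Ioo.preimage (by fun_prop)
  · simp [hr]

theorem volume_box [FiniteDimensional ℝ V] [MeasurableSpace V] [BorelSpace V] :
    volume (b.box r) = ∏ i, ENNReal.ofReal (2 * r i) := by
  have hbox : b.box r = b.repr ⁻¹' ((MeasurableEquiv.toLp 2 (ι → ℝ)).symm ⁻¹'
      univ.pi fun i => Icc (-r i) (r i)) := by
    ext x
    simp only [box, abs_le, mem_ofPred_eq, mem_preimage, mem_univ_pi, mem_Icc]
    simp [b.repr_apply_apply]
  have hmeas : MeasurableSet (univ.pi fun i => Icc (-r i) (r i)) :=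
    MeasurableSet.univ_pi fun _ => measurableSet_Icc
  rw [hbox, b.measurePreserving_repr.measure_preimage
      (hmeas.preimage (MeasurableEquiv.toLp 2 (ι → ℝ)).symm.measurable).nullMeasurableSet,
    (EuclideanSpace.volume_preserving_symm_measurableEquiv_toLp ι).measure_preimage
      hmeas.nullMeasurableSet, volume_pi_pi]
  simp only [Real.volume_Icc, sub_neg_eq_add, two_mul]

theorem add_box_subset_box {S : Set V} {c : ι → ℝ} (hS : ∀ y ∈ S, ∀ i, |⟪b i, y⟫| ≤ c i) :
    S + b.box r ⊆ b.box (c + r) := by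
  rintro _ ⟨y, hy, k, hk, rfl⟩ i
  rw [inner_add_right]
  exact (abs_add_le _ _).trans (add_le_add (hS y hy i) (hk i))

theorem abs_inner_le_norm (i : ι) (x : V) : |⟪b i, x⟫| ≤ ‖x‖ :=
  (abs_real_inner_le_norm _ _).trans_eq (by rw [b.orthonormal.1 i, one_mul])

theorem box_subset_add_box {A : Set V} {a : V} (hA : Balanced ℝ A) (ha : a ∈ A) {r s : ι → ℝ}
    (i₀ : ι) (hr : 0 ≤ r i₀) (hs : s i₀ ≤ ⟪b i₀, a⟫ + r i₀)
    (hsr : ∀ i ≠ i₀, s i + |⟪b i, a⟫| ≤ r i) : b.box s ⊆ A + b.box r := by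
  intro x hx
  -- write `x = t • a + (x - t • a)`, with `t ∈ [-1, 1]` chosen to fit the `i₀`-th coordinate
  obtain ⟨t, ht, hti₀⟩ := exists_abs_le_one_abs_sub_mul_le hr ((hx i₀).trans hs)
  refine ⟨t • a, hA.smul_mem (by rwa [Real.norm_eq_abs]) ha, x - t • a, fun i => ?_,
    add_sub_cancel _ _⟩
  rw [inner_sub_right, real_inner_smul_right]
  obtain rfl | hi := eq_or_ne i i₀
  · exact hti₀
  calc |⟪b i, x⟫ - t * ⟪b i, a⟫| ≤ |⟪b i, x⟫| + |t| * |⟪b i, a⟫| := by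
        rw [← abs_mul]; exact abs_sub _ _
    _ ≤ s i + 1 * |⟪b i, a⟫| := by gcongr; exact hx i
    _ ≤ r i := by rw [one_mul]; exact hsr i hi

section Option

variable {κ : Type*} [Fintype κ] (b : OrthonormalBasis (Option κ) ℝ V)

theorem exists_orthonormalBasis_orthogonal_none :
    ∃ e : OrthonormalBasis κ ℝ (ℝ ∙ b none)ᗮ, ∀ i, (e i : V) = b (some i) := by
  have : FiniteDimensional ℝ V := b.toBasis.finiteDimensional_of_finite
  have hfinrank : Fact (finrank ℝ V = Fintype.card κ + 1) := ⟨by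
    rw [finrank_eq_card_basis b.toBasis, Fintype.card_option]⟩
  have hmem (i : κ) : b (some i) ∈ (ℝ ∙ b none)ᗮ :=
    Submodule.mem_orthogonal_singleton_iff_inner_right.2
      (b.orthonormal.2 (Option.some_ne_none i).symm)
  let v (i : κ) : (ℝ ∙ b none)ᗮ := ⟨b (some i), hmem i⟩
  have hon : Orthonormal ℝ v := (Submodule.subtypeₗᵢ _).orthonormal_comp_iff.1
    (b.orthonormal.comp _ (Option.some_injective κ))
  obtain ⟨e, he⟩ := Orthonormal.exists_orthonormalBasis_extension_of_card_eq (v := v) (s := univ)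
    (Submodule.finrank_orthogonal_span_singleton (b.orthonormal.ne_zero none))
    (hon.comp _ Subtype.val_injective)
  exact ⟨e, fun i => congrArg Subtype.val (he i (mem_univ i))⟩

variable {b} {e : OrthonormalBasis κ ℝ (ℝ ∙ b none)ᗮ}

theorem preimage_coe_box (he : ∀ i, (e i : V) = b (some i)) {r : Option κ → ℝ}
    (hr : 0 ≤ r none) :
    ((↑) ⁻¹' b.box r : Set (ℝ ∙ b none)ᗮ) = e.box fun i => r (some i) := by
  ext x
  have hx : ⟪b none, (x : V)⟫ = 0 := Submodule.mem_orthogonal_singleton_iff_inner_right.1 x.2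
  simp [box, Option.forall, hx, hr, ← he, Submodule.coe_inner]

theorem volume_box_option_lt [FiniteDimensional ℝ V] [MeasurableSpace V] [BorelSpace V]
    (e : OrthonormalBasis (Option κ) ℝ V) {x y x' y' : ℝ} (hx : 0 ≤ x) (hy : 0 ≤ y)
    (hy' : 0 ≤ y') (h : x * y ^ Fintype.card κ < x' * y' ^ Fintype.card κ) :
    volume (e.box fun i => i.elim x fun _ => y) <
      volume (e.box fun i => i.elim x' fun _ => y') := by
  have hpos : 0 < x' * y' ^ Fintype.card κ := (mul_nonneg hx (pow_nonneg hy _)).trans_lt h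
  have hvol (u v : ℝ) (hu : 0 ≤ u) (hv : 0 ≤ v) :
      volume (e.box fun i => i.elim u fun _ => v) =
        ENNReal.ofReal (2 ^ (Fintype.card κ + 1) * (u * v ^ Fintype.card κ)) := by
    simp only [e.volume_box, Fintype.prod_option, Option.elim, Finset.prod_const, Finset.card_univ]
    rw [← ENNReal.ofReal_pow (by positivity), ← ENNReal.ofReal_mul (by positivity)]
    ring_nf
  have hx' : 0 ≤ x' := by
    by_contra! hneg
    nlinarith [pow_nonneg hy' (Fintype.card κ)]
  rw [hvol x y hx hy, hvol x' y' hx' hy',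
    ENNReal.ofReal_lt_ofReal_iff (mul_pos (by positivity) hpos)]
  gcongr

end Option

end OrthonormalBasis

theorem exists_convexBody_volume_section_add_lt {ι V : Type*} [Fintype ι]
    [NormedAddCommGroup V] [InnerProductSpace ℝ V] [FiniteDimensional ℝ V] [MeasurableSpace V]
    [BorelSpace V] (b : OrthonormalBasis (Option (Option ι)) ℝ V) {A B : Set V} {a : V}
    {ρ β : ℝ} (hA : Balanced ℝ A) (ha : a ∈ A) (hAρ : ∀ x ∈ A, ‖x‖ ≤ ρ)
    (hBρ : ∀ y ∈ B, ‖y‖ ≤ ρ) (hβ : 0 ≤ β) (hB : ∀ y ∈ B, |⟪b (some none), y⟫| ≤ β)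
    (hβa : β < ⟪b (some none), a⟫) :
    ∃ K : Set V, IsCompact K ∧ Convex ℝ K ∧ (interior K).Nonempty ∧
      volume ((↑) ⁻¹' (B + K) : Set (ℝ ∙ b none)ᗮ) <
        volume ((↑) ⁻¹' (A + K) : Set (ℝ ∙ b none)ᗮ) := by
  set α := ⟪b (some none), a⟫
  have hρ : 0 ≤ ρ := (norm_nonneg a).trans (hAρ a ha)
  obtain ⟨R, hR, hRρ⟩ := ((eventually_mul_add_pow_lt_mul_sub_pow
    (show β + 1 < α + 1 by linarith) ρ (Fintype.card ι)).and
      (eventually_ge_atTop (ρ + 1))).exists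
  obtain ⟨e, he⟩ := b.exists_orthonormalBasis_orthogonal_none
  -- half-widths normal to `E`, along `b (some none)`, and along the other directions of `E`
  let radius (x y z : ℝ) : Option (Option ι) → ℝ := fun i => i.elim x fun j => j.elim y fun _ => z
  have hlow : b.box (radius 0 (α + 1) (R - ρ)) ⊆ A + b.box (radius (ρ + 1) 1 R) := by
    refine b.box_subset_add_box hA ha (some none) zero_le_one le_rfl ?_
    have haρ (i) : |⟪b i, a⟫| ≤ ρ := b.abs_inner_le_norm i a |>.trans (hAρ a ha)
    rintro (_ | _ | i) hi
    · simp only [radius, Option.elim, zero_add]; linarith [haρ none]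
    · exact absurd rfl hi
    · simp only [radius, Option.elim]; linarith [haρ (some (some i))]
  have hup : B + b.box (radius (ρ + 1) 1 R) ⊆ b.box (radius (ρ + (ρ + 1)) (β + 1) (R + ρ)) := by
    refine (b.add_box_subset_box _ (c := radius ρ β ρ) ?_).trans_eq (congrArg b.box ?_)
    · rintro y hy (_ | _ | i)
      · exact b.abs_inner_le_norm _ y |>.trans (hBρ y hy)
      · exact hB y hy
      · exact b.abs_inner_le_norm _ y |>.trans (hBρ y hy)
    · funext i
      rcases i with _ | _ | _ <;> simp only [radius, Option.elim, Pi.add_apply, add_comm ρ R]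
  refine ⟨b.box (radius (ρ + 1) 1 R), b.isCompact_box _, b.convex_box _,
    b.interior_box_nonempty ?_, ?_⟩
  · rintro (_ | _ | _) <;> simp only [radius, Option.elim] <;> linarith
  calc volume ((↑) ⁻¹' (B + b.box (radius (ρ + 1) 1 R)) : Set (ℝ ∙ b none)ᗮ)
      ≤ volume ((↑) ⁻¹' b.box (radius (ρ + (ρ + 1)) (β + 1) (R + ρ)) : Set (ℝ ∙ b none)ᗮ) :=
        measure_mono (preimage_mono hup)
    _ < volume ((↑) ⁻¹' b.box (radius 0 (α + 1) (R - ρ)) : Set (ℝ ∙ b none)ᗮ) := by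
        rw [OrthonormalBasis.preimage_coe_box he (show 0 ≤ ρ + (ρ + 1) by linarith),
          OrthonormalBasis.preimage_coe_box he le_rfl]
        exact e.volume_box_option_lt (by linarith) (by linarith) (by linarith) hR
    _ ≤ volume ((↑) ⁻¹' (A + b.box (radius (ρ + 1) 1 R)) : Set (ℝ ∙ b none)ᗮ) :=
        measure_mono (preimage_mono hlow)

theorem subset_of_section_sums_symmetric_general (n : ℕ) (hn : 2 ≤ n)
    (A B : Set (EuclideanSpace ℝ (Fin n)))
    (hA₁ : IsCompact A) (hA₂ : Convex ℝ A)
    (hB₁ : IsCompact B) (hB₂ : Convex ℝ B) (hB₃ : (interior B).Nonempty)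
    (hAsymm : A = -A) (hBsymm : B = -B)
    (h : ∀ K : Set (EuclideanSpace ℝ (Fin n)),
        IsCompact K → Convex ℝ K → (interior K).Nonempty →
        ∀ E : Submodule ℝ (EuclideanSpace ℝ (Fin n)), Module.finrank ℝ E = n - 1 →
        volume ((↑) ⁻¹' (A + K) : Set E) ≤ volume ((↑) ⁻¹' (B + K) : Set E)) :
    A ⊆ B := by
  intro a ha
  by_contra haB
  have hbal {S : Set (EuclideanSpace ℝ (Fin n))} (hS : Convex ℝ S) (hsymm : S = -S) :
      Balanced ℝ S :=
    (balanced_iff_neg_mem hS).2 fun x hx => by rw [hsymm]; exact neg_mem_neg.2 hx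
  obtain ⟨w, β, hw, hβ, hBw, hβa⟩ := exists_unit_abs_inner_le_lt_inner hB₂ hB₁.isClosed
    (hbal hB₂ hBsymm) (hB₃.mono interior_subset) haB
  obtain ⟨ρ, hρ⟩ := (hA₁.union hB₁).isBounded.subset_closedBall 0
  have hcard : finrank ℝ (EuclideanSpace ℝ (Fin n)) =
      Fintype.card (Option (Option (Fin (n - 2)))) := by
    simp only [finrank_euclideanSpace_fin, Fintype.card_option, Fintype.card_fin]; omega
  obtain ⟨b, rfl⟩ := exists_orthonormalBasis_apply_eq hcard (some none) hw
  obtain ⟨K, hK₁, hK₂, hK₃, hlt⟩ := exists_convexBody_volume_section_add_lt b (hbal hA₂ hAsymm) ha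
    (fun x hx => mem_closedBall_zero_iff.1 (hρ (Or.inl hx)))
    (fun y hy => mem_closedBall_zero_iff.1 (hρ (Or.inr hy))) hβ hBw hβa
  have : Fact (finrank ℝ (EuclideanSpace ℝ (Fin n)) = n - 1 + 1) :=
    ⟨by rw [finrank_euclideanSpace_fin]; omega⟩
  exact (h K hK₁ hK₂ hK₃ _
    (Submodule.finrank_orthogonal_span_singleton (b.orthonormal.ne_zero none))).not_gt hlt

/-- **Corollary (symmetric bodies: hyperplane sections of Minkowski sums).**
If `A`, `B` are centrally symmetric convex bodies in `ℝⁿ`, `n ≥ 2`, and for every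
convex body `K` and every `(n-1)`-dimensional linear subspace `E` the
`(n-1)`-dimensional volume of `E ∩ (A + K)` is at most that of `E ∩ (B + K)`,
then `A ⊆ B`. -/
theorem subset_of_section_sums_symmetric (n : ℕ) (hn : 2 ≤ n)
    (A B : Set (EuclideanSpace ℝ (Fin n)))
    (hA₁ : IsCompact A) (hA₂ : Convex ℝ A) (hA₃ : (interior A).Nonempty)
    (hB₁ : IsCompact B) (hB₂ : Convex ℝ B) (hB₃ : (interior B).Nonempty)
    (hAsymm : A = -A) (hBsymm : B = -B)
    (h : ∀ K : Set (EuclideanSpace ℝ (Fin n)),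
        IsCompact K → Convex ℝ K → (interior K).Nonempty →
        ∀ E : Submodule ℝ (EuclideanSpace ℝ (Fin n)), Module.finrank ℝ E = n - 1 →
        volume ((↑) ⁻¹' (A + K) : Set E) ≤ volume ((↑) ⁻¹' (B + K) : Set E)) :
    A ⊆ B :=
  subset_of_section_sums_symmetric_general n hn A B hA₁ hA₂ hB₁ hB₂ hB₃ hAsymm hBsymm h
end

section
/- Let F be a non-affine fractional linear map on ℝⁿ (i.e., with c ≠ 0), let x₀ be a point in the domain of F and set y₀ = F(x₀). Then there exist invertible linear maps B, C ∈ GL_n(ℝ) such that for every x ∈ ℝⁿ for which the expressions are defined (x₁ ≠ 1 and Cx + x₀ not on the defining hyperplane of F), one has B(F(Cx + x₀) − y₀) = F₀(x), where F₀(x) = x/(x₁ − 1) is the canonical fractional linear map. -/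
/-!
With `t₀ = ⟪x₀, c⟫ + d`, the increment `F (x₀ + u) - F x₀` equals `(⟪x₀ + u, c⟫ + d)⁻¹ • L u`
for the linear map `L u = M u - (⟪u, c⟫ / t₀) • (M x₀ + b)`, which is invertible because the
block matrix is. Choosing `C` with `⟪C x, c⟫ = -t₀ * x 0` (a rescaled reflection taking `c` to a
multiple of the first basis vector) makes the denominator `t₀ * (1 - x 0)`, and then
`B = -t₀ • C⁻¹ ∘ L⁻¹` turns the increment into `(x 0 - 1)⁻¹ • x`.
-/

open scoped InnerProductSpace

variable {E : Type*} [NormedAddCommGroup E] [InnerProductSpace ℝ E]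

theorem exists_linearEquiv_inner_apply_eq {c w : E} (hc : c ≠ 0) (hw : w ≠ 0) :
    ∃ C : E ≃ₗ[ℝ] E, ∀ x, ⟪C x, c⟫_ℝ = ⟪x, w⟫_ℝ := by
  have hc' : ‖c‖ ≠ 0 := norm_ne_zero_iff.mpr hc
  have hw' : ‖w‖ ≠ 0 := norm_ne_zero_iff.mpr hw
  set R := Submodule.reflection (ℝ ∙ (c - (‖c‖ / ‖w‖) • w))ᗮ
  have hRc : R c = (‖c‖ / ‖w‖) • w := by
    apply Submodule.reflection_sub
    rw [norm_smul, Real.norm_of_nonneg (by positivity), div_mul_cancel₀ _ hw']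
  refine ⟨R.toLinearEquiv.trans (LinearEquiv.smulOfNeZero ℝ E _ (div_ne_zero hw' hc')),
    fun x => ?_⟩
  change ⟪(‖w‖ / ‖c‖) • R x, c⟫_ℝ = _
  rw [real_inner_smul_left, R.inner_map_eq_flip, Submodule.reflection_symm, hRc,
    real_inner_smul_right]
  field_simp

noncomputable def fracLinear (M : E →ₗ[ℝ] E) (b c : E) (d : ℝ) (x : E) : E :=
  (⟪x, c⟫_ℝ + d)⁻¹ • (M x + b)

/-- `⟪x₀, c⟫ + d` times the derivative of `fracLinear M b c d` at `x₀`. -/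
noncomputable def fracLinearIncrement (M : E →ₗ[ℝ] E) (b c : E) (d : ℝ) (x₀ : E) : E →ₗ[ℝ] E :=
  M - (innerₗ E c).smulRight ((⟪x₀, c⟫_ℝ + d)⁻¹ • (M x₀ + b))

section
variable {M : E →ₗ[ℝ] E} {b c : E} {d : ℝ} {x₀ : E}

theorem fracLinearIncrement_apply (v : E) :
    fracLinearIncrement M b c d x₀ v = M v - (⟪v, c⟫_ℝ / (⟪x₀, c⟫_ℝ + d)) • (M x₀ + b) := by
  simp only [fracLinearIncrement, LinearMap.sub_apply, LinearMap.smulRight_apply,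
    innerₗ_apply_apply, real_inner_comm c v, smul_smul, div_eq_mul_inv]

theorem fracLinear_add_sub (hx₀ : ⟪x₀, c⟫_ℝ + d ≠ 0) {u : E} (hu : ⟪u + x₀, c⟫_ℝ + d ≠ 0) :
    fracLinear M b c d (u + x₀) - fracLinear M b c d x₀ =
      (⟪u + x₀, c⟫_ℝ + d)⁻¹ • fracLinearIncrement M b c d x₀ u := by
  rw [fracLinearIncrement_apply, fracLinear, fracLinear, map_add, inner_add_left] at *
  set t₀ := ⟪x₀, c⟫_ℝ + d
  have hu' : ⟪u, c⟫_ℝ + t₀ ≠ 0 := by rwa [← add_assoc]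
  have hcoeff : (⟪u, c⟫_ℝ + t₀)⁻¹ - t₀⁻¹ = -((⟪u, c⟫_ℝ + t₀)⁻¹ * (⟪u, c⟫_ℝ / t₀)) := by
    field_simp
    ring
  rw [add_assoc _ _ d]
  linear_combination (norm := module) hcoeff • (M x₀ + b)

theorem fracLinearIncrement_injective
    (hdet : Function.Injective fun p : E × ℝ => (M p.1 + p.2 • b, ⟪p.1, c⟫_ℝ + p.2 * d))
    (hx₀ : ⟪x₀, c⟫_ℝ + d ≠ 0) : Function.Injective (fracLinearIncrement M b c d x₀) := by
  rw [injective_iff_map_eq_zero]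
  intro v hv
  set s := ⟪v, c⟫_ℝ / (⟪x₀, c⟫_ℝ + d)
  have hblock : (v - s • x₀, -s) = ((0 : E), (0 : ℝ)) := by
    refine hdet ?_
    simp only [Prod.mk.injEq, map_zero, zero_smul, add_zero, zero_mul]
    constructor
    · rw [← hv, fracLinearIncrement_apply, map_sub, map_smul, neg_smul, smul_add]
      abel
    · rw [inner_sub_left, real_inner_smul_left, inner_zero_left]
      linear_combination -div_mul_cancel₀ ⟪v, c⟫_ℝ hx₀
  simp only [Prod.mk.injEq, neg_eq_zero] at hblock
  simpa [hblock.2] using hblock.1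
end

theorem exists_linearEquiv_fracLinear_sub_eq [FiniteDimensional ℝ E]
    {M : E →ₗ[ℝ] E} {b c : E} {d : ℝ} (hc : c ≠ 0)
    (hdet : Function.Injective fun p : E × ℝ => (M p.1 + p.2 • b, ⟪p.1, c⟫_ℝ + p.2 * d))
    {x₀ : E} (hx₀ : ⟪x₀, c⟫_ℝ + d ≠ 0) {w : E} (hw : w ≠ 0) :
    ∃ B C : E ≃ₗ[ℝ] E, ∀ x : E, ⟪x, w⟫_ℝ ≠ 1 →
      B (fracLinear M b c d (C x + x₀) - fracLinear M b c d x₀) = (⟪x, w⟫_ℝ - 1)⁻¹ • x := by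
  set t₀ := ⟪x₀, c⟫_ℝ + d
  obtain ⟨C, hC⟩ := exists_linearEquiv_inner_apply_eq hc (smul_ne_zero (neg_ne_zero.mpr hx₀) hw)
  let L := LinearEquiv.ofInjectiveEndo _ (fracLinearIncrement_injective hdet hx₀)
  refine ⟨L.symm.trans (C.symm.trans (.smulOfNeZero ℝ E (-t₀) (neg_ne_zero.mpr hx₀))), C,
    fun x hx => ?_⟩
  have hden : ⟪C x + x₀, c⟫_ℝ + d = t₀ * (1 - ⟪x, w⟫_ℝ) := by
    rw [inner_add_left, hC, real_inner_smul_right]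
    ring
  have hden_ne : t₀ * (1 - ⟪x, w⟫_ℝ) ≠ 0 := mul_ne_zero hx₀ (sub_ne_zero.mpr hx.symm)
  rw [fracLinear_add_sub hx₀ (hden ▸ hden_ne), hden, map_smul]
  change _ • (-t₀) • C.symm (L.symm (L (C x))) = _
  rw [L.symm_apply_apply, C.symm_apply_apply, smul_smul]
  congr 1
  field_simp
  ring

/-- **Proposition (canonical form of a fractional linear map).**
Let `F(x) = (Mx + b)/(⟨x,c⟩ + d)` be a non-affine fractional linear map
(`c ≠ 0`, block matrix `[[M,b],[c,d]]` invertible, expressed as bijectivity of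
the corresponding linear map on `ℝⁿ × ℝ`), let `x₀` be in the domain of `F`
and `y₀ = F(x₀)`. Then there are invertible linear maps `B`, `C` such that
`B(F(Cx + x₀) - y₀) = F₀(x)` wherever both sides are defined, where
`F₀(x) = x/(x₁ - 1)` is the canonical fractional linear map. -/
theorem exists_canonical_form (n : ℕ) [NeZero n]
    (M : EuclideanSpace ℝ (Fin n) →ₗ[ℝ] EuclideanSpace ℝ (Fin n))
    (b c : EuclideanSpace ℝ (Fin n)) (d : ℝ) (hc : c ≠ 0)
    (hdet : Function.Bijective (fun p : EuclideanSpace ℝ (Fin n) × ℝ =>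
      (M p.1 + p.2 • b, (inner ℝ p.1 c : ℝ) + p.2 * d)))
    (x₀ : EuclideanSpace ℝ (Fin n)) (hx₀ : (inner ℝ x₀ c : ℝ) + d ≠ 0) :
    ∃ B C : EuclideanSpace ℝ (Fin n) ≃ₗ[ℝ] EuclideanSpace ℝ (Fin n),
      ∀ x : EuclideanSpace ℝ (Fin n), x 0 ≠ 1 →
        (inner ℝ (C x + x₀) c : ℝ) + d ≠ 0 →
        B (((inner ℝ (C x + x₀) c : ℝ) + d)⁻¹ • (M (C x + x₀) + b) -
            ((inner ℝ x₀ c : ℝ) + d)⁻¹ • (M x₀ + b)) = (x 0 - 1)⁻¹ • x := by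
  have hfirst (x : EuclideanSpace ℝ (Fin n)) : ⟪x, EuclideanSpace.single 0 1⟫_ℝ = x 0 := by
    simp [EuclideanSpace.inner_single_right]
  obtain ⟨B, C, hBC⟩ := exists_linearEquiv_fracLinear_sub_eq hc hdet.injective hx₀
    (w := EuclideanSpace.single 0 1) (by simp)
  refine ⟨B, C, fun x hx _ => ?_⟩
  simpa only [hfirst, fracLinear] using hBC x (by rwa [hfirst])
end
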